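/- There exists a finite constant C > 0 such that for all nonnegative measurable functions f₁, f₂ on ℝ and every λ > 0, the Lebesgue measure of {x ∈ ℝ : T(f₁,f₂)(x) > λ} is at most C λ^{−2} ‖f₁‖_∞² ‖f₂‖_1²; that is, in dimension n = 2 the operator T maps L^∞(ℝ) × L¹(ℝ) boundedly into weak-L²(ℝ) (weak type at the point K = (0, 1; 1/2)). -/

import Mathlib

open MeasureTheory ENNReal

/-- The `L^p` "norm" (with respect to Lebesgue measure on `ℝ`) of an
`ℝ≥0∞`-valued function, with the convention for `p = ∞`. -/
noncomputable def lpNorm (p : ℝ≥0∞) (g : ℝ → ℝ≥0∞) : ℝ≥0∞ :=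
  if p = ∞ then essSup g (volume : Measure ℝ)
  else (∫⁻ x, g x ^ p.toReal) ^ (1 / p.toReal)

/-- The bilinear spherical average in dimension `n = 2`:
`T(f₁,f₂)(x) = (1/(2π)) ∫₀^{2π} f₁(x − cos t) f₂(x − sin t) dt`. -/
noncomputable def T2 (f₁ f₂ : ℝ → ℝ) (x : ℝ) : ℝ≥0∞ :=
  (ENNReal.ofReal (2 * Real.pi))⁻¹ *
    ∫⁻ t in Set.Ioc 0 (2 * Real.pi),
      ENNReal.ofReal (f₁ (x - Real.cos t)) * ENNReal.ofReal (f₂ (x - Real.sin t))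

/-!
Since `f₁ ≤ ‖f₁‖_∞` a.e., `T(f₁,f₂) ≤ ‖f₁‖_∞ · A f₂` with `A g (x) = ⨍ g (x - sin t) dt`, and
`‖A g‖_{L^{2,∞}} ≲ ‖g‖₁` suffices. Split the `t`-integral at `|cos t| = δ`. Where `|cos t| ≥ δ`,
the substitution `y = sin t` on its three monotone branches in `(0, 2π]` bounds that part of `A g`
pointwise by `3‖g‖₁ / (2πδ)`; the set `{|cos t| < δ}` has measure `O(δ)`, so the other part has
`L¹` norm `O(δ ‖g‖₁)`. Taking `δ ≍ ‖g‖₁ / λ` makes the first part `λ / 2`, and Chebyshev's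
inequality applied to the second gives `|{A g > λ}| ≲ ‖g‖₁² / λ²`.
-/

open Real Set

lemma setLIntegral_comp_le_of_le_abs_deriv {s : Set ℝ} {f f' : ℝ → ℝ} (hs : MeasurableSet s)
    (hf' : ∀ x ∈ s, HasDerivWithinAt f (f' x) s x) (hf : InjOn f s) {δ : ℝ} (hδ : 0 < δ)
    (hδf' : ∀ x ∈ s, δ ≤ |f' x|) (g : ℝ → ℝ≥0∞) :
    ∫⁻ x in s, g (f x) ≤ ENNReal.ofReal δ⁻¹ * ∫⁻ y, g y := by
  calc ∫⁻ x in s, g (f x)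
      ≤ ∫⁻ x in s, ENNReal.ofReal δ⁻¹ * (ENNReal.ofReal |f' x| * g (f x)) := by
        refine setLIntegral_mono' hs fun x hx => ?_
        have h1 : 1 ≤ ENNReal.ofReal δ⁻¹ * ENNReal.ofReal |f' x| := by
          rw [← ENNReal.ofReal_mul (by positivity), ENNReal.one_le_ofReal,
            ← div_eq_inv_mul, one_le_div hδ]
          exact hδf' x hx
        calc g (f x) ≤ (ENNReal.ofReal δ⁻¹ * ENNReal.ofReal |f' x|) * g (f x) :=
              le_mul_of_one_le_left' h1
          _ = _ := mul_assoc _ _ _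
    _ = ENNReal.ofReal δ⁻¹ * ∫⁻ y in f '' s, g y := by
        rw [lintegral_const_mul' _ _ ENNReal.ofReal_ne_top,
          lintegral_image_eq_lintegral_abs_deriv_mul hs hf' hf]
    _ ≤ ENNReal.ofReal δ⁻¹ * ∫⁻ y, g y := by
        gcongr
        exact Measure.restrict_le_self

lemma setLIntegral_comp_le_of_cover {ι : Type*} [Fintype ι] {s : Set ℝ} (hs : MeasurableSet s)
    (p : ι → Set ℝ) (hp : ∀ i, MeasurableSet (p i)) (hsp : s ⊆ ⋃ i, p i) {f f' : ℝ → ℝ}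
    (hf' : ∀ x, HasDerivAt f (f' x) x) (hf : ∀ i, InjOn f (p i)) {δ : ℝ} (hδ : 0 < δ)
    (hδf' : ∀ x ∈ s, δ ≤ |f' x|) (g : ℝ → ℝ≥0∞) :
    ∫⁻ x in s, g (f x) ≤ Fintype.card ι * (ENNReal.ofReal δ⁻¹ * ∫⁻ y, g y) := by
  have hs_sub : s ⊆ ⋃ i, s ∩ p i := by rw [← inter_iUnion]; exact subset_inter subset_rfl hsp
  calc ∫⁻ x in s, g (f x) ≤ ∑ i, ∫⁻ x in s ∩ p i, g (f x) :=
        (lintegral_mono_set hs_sub).trans ((lintegral_iUnion_le _ _).trans_eq (tsum_fintype _))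
    _ ≤ ∑ _i : ι, ENNReal.ofReal δ⁻¹ * ∫⁻ y, g y := by
        gcongr with i
        exact setLIntegral_comp_le_of_le_abs_deriv (hs.inter (hp i))
          (fun x _ => (hf' x).hasDerivWithinAt) ((hf i).mono inter_subset_right) hδ
          (fun x hx => hδf' x hx.1) g
    _ = _ := by rw [Finset.sum_const, Finset.card_univ, nsmul_eq_mul]

lemma injOn_of_eq_comp_sub {f h : ℝ → ℝ} {c a b : ℝ} (hfh : ∀ x, f x = h (x - c))
    (hh : InjOn h (Icc (a - c) (b - c))) : InjOn f (Icc a b) := by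
  intro x hx y hy hxy
  rw [hfh, hfh] at hxy
  have := hh ⟨by linarith [hx.1], by linarith [hx.2]⟩ ⟨by linarith [hy.1], by linarith [hy.2]⟩ hxy
  linarith

lemma injOn_sin_Icc_pi_div_two : InjOn sin (Icc (π / 2) (3 * π / 2)) :=
  injOn_of_eq_comp_sub (c := π / 2) (fun x => (cos_sub_pi_div_two x).symm)
    (by convert injOn_cos using 2 <;> ring)

lemma injOn_sin_Icc_three_pi_div_two : InjOn sin (Icc (3 * π / 2) (2 * π)) :=
  injOn_of_eq_comp_sub (c := 2 * π) (fun x => (sin_sub_two_pi x).symm)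
    (injOn_sin.mono (Icc_subset_Icc (by linarith) (by linarith [pi_pos])))

lemma injOn_cos_Icc_pi : InjOn cos (Icc π (2 * π)) :=
  injOn_of_eq_comp_sub (h := Neg.neg ∘ cos) (c := π) (fun x => by simp [cos_sub_pi])
    (by convert neg_injective.comp_injOn injOn_cos using 2 <;> ring)

lemma setLIntegral_sin_le {δ : ℝ} (hδ : 0 < δ) (g : ℝ → ℝ≥0∞) :
    ∫⁻ t in Ioc 0 (2 * π) ∩ {t | δ ≤ |cos t|}, g (sin t)
      ≤ 3 * (ENNReal.ofReal δ⁻¹ * ∫⁻ y, g y) := by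
  have hcover : Ioc 0 (2 * π) ∩ {t | δ ≤ |cos t|}
      ⊆ ⋃ i, ![Icc 0 (π / 2), Icc (π / 2) (3 * π / 2), Icc (3 * π / 2) (2 * π)] i := by
    rintro t ⟨⟨ht0, ht2π⟩, -⟩
    rcases le_or_gt t (π / 2) with h1 | h1
    · exact mem_iUnion.2 ⟨0, ht0.le, h1⟩
    rcases le_or_gt t (3 * π / 2) with h2 | h2
    · exact mem_iUnion.2 ⟨1, h1.le, h2⟩
    · exact mem_iUnion.2 ⟨2, h2.le, ht2π⟩
  exact_mod_cast setLIntegral_comp_le_of_cover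
    (measurableSet_Ioc.inter (measurableSet_le measurable_const measurable_cos.abs)) _
    (fun i => by fin_cases i <;> exact measurableSet_Icc) hcover hasDerivAt_sin
    (fun i => by
      fin_cases i
      · exact injOn_sin.mono (Icc_subset_Icc (by linarith [pi_pos]) le_rfl)
      · exact injOn_sin_Icc_pi_div_two
      · exact injOn_sin_Icc_three_pi_div_two)
    hδ (fun t ht => ht.2) g

lemma volume_Ioc_inter_abs_cos_lt_le {δ : ℝ} (hδ : 0 < δ) :
    volume (Ioc 0 (2 * π) ∩ {t | |cos t| < δ}) ≤ ENNReal.ofReal (4 * π * δ) := by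
  set B := Ioc 0 (2 * π) ∩ {t | |cos t| < δ}
  have hB : MeasurableSet B :=
    measurableSet_Ioc.inter (measurableSet_lt measurable_cos.abs measurable_const)
  rcases le_or_gt δ (1 / 2) with hδ2 | hδ2
  · have hcover : B ⊆ ⋃ i, ![Icc 0 π, Icc π (2 * π)] i := by
      rintro t ⟨⟨ht0, ht2π⟩, -⟩
      rcases le_or_gt t π with h | h
      · exact mem_iUnion.2 ⟨0, ht0.le, h⟩
      · exact mem_iUnion.2 ⟨1, h.le, ht2π⟩
    have hsin : ∀ t ∈ B, 1 / 2 ≤ |-sin t| := by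
      intro t ht
      have hcos : |cos t| < δ := ht.2
      rw [abs_neg]
      nlinarith [abs_nonneg (sin t), abs_nonneg (cos t), sq_abs (sin t), sq_abs (cos t),
        sin_sq_add_cos_sq t]
    calc volume B = ∫⁻ t in B, (Ioo (-δ) δ).indicator 1 (cos t) := by
          rw [← setLIntegral_one]
          exact setLIntegral_congr_fun hB fun t ht =>
            (indicator_of_mem (s := Ioo (-δ) δ) (abs_lt.1 ht.2) (1 : ℝ → ℝ≥0∞)).symm
      _ ≤ 2 * (ENNReal.ofReal (1 / 2)⁻¹ * ∫⁻ y, (Ioo (-δ) δ).indicator 1 y) := by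
          exact_mod_cast setLIntegral_comp_le_of_cover hB _
            (fun i => by fin_cases i <;> exact measurableSet_Icc) hcover hasDerivAt_cos
            (fun i => by
              fin_cases i
              · exact injOn_cos
              · exact injOn_cos_Icc_pi)
            (by norm_num) hsin ((Ioo (-δ) δ).indicator 1)
      _ = ENNReal.ofReal (8 * δ) := by
          rw [lintegral_indicator_one measurableSet_Ioo, Real.volume_Ioo,
            ← ENNReal.ofReal_ofNat 2, ← ENNReal.ofReal_mul (by norm_num),
            ← ENNReal.ofReal_mul (by norm_num)]
          congr 1
          ring
      _ ≤ ENNReal.ofReal (4 * π * δ) := ENNReal.ofReal_le_ofReal (by nlinarith [pi_gt_three])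
  · calc volume B ≤ volume (Ioc 0 (2 * π)) := measure_mono inter_subset_left
      _ ≤ ENNReal.ofReal (4 * π * δ) := by
          rw [Real.volume_Ioc]
          exact ENNReal.ofReal_le_ofReal (by nlinarith [pi_pos])

section Translation

variable {g : ℝ → ℝ≥0∞} {φ : ℝ → ℝ}

lemma measurable_uncurry_sub_comp (hg : Measurable g) (hφ : Measurable φ) :
    Measurable (Function.uncurry fun x t => g (x - φ t)) :=
  hg.comp (measurable_fst.sub (hφ.comp measurable_snd))

lemma measurable_setLIntegral_sub_comp (hg : Measurable g) (hφ : Measurable φ) (V : Set ℝ) :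
    Measurable fun x => ∫⁻ t in V, g (x - φ t) :=
  (measurable_uncurry_sub_comp hg hφ).lintegral_prod_right

lemma lintegral_setLIntegral_sub_comp (hg : Measurable g) (hφ : Measurable φ) (V : Set ℝ) :
    ∫⁻ x, ∫⁻ t in V, g (x - φ t) = volume V * ∫⁻ y, g y := by
  rw [lintegral_lintegral_swap (measurable_uncurry_sub_comp hg hφ).aemeasurable]
  simp_rw [lintegral_sub_right_eq_self g]
  rw [setLIntegral_const, mul_comm]

lemma ae_ae_sub_comp {p : ℝ → Prop} (hp : MeasurableSet {y | p y}) (h : ∀ᵐ y, p y)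
    (hφ : Measurable φ) (V : Set ℝ) : ∀ᵐ x, ∀ᵐ t ∂volume.restrict V, p (x - φ t) := by
  refine Measure.ae_ae_of_ae_prod (μ := (volume : Measure ℝ)) (ν := volume.restrict V)
    (p := fun z => p (z.1 - φ z.2)) (ae_iff.2 ?_)
  have hmeas : MeasurableSet {z : ℝ × ℝ | ¬p (z.1 - φ z.2)} :=
    ((measurable_fst.sub (hφ.comp measurable_snd)) hp).compl
  rw [Measure.prod_apply_symm hmeas]
  have hslice : ∀ t, volume {x | ¬p (x - φ t)} = 0 := fun t =>
    ((measurePreserving_sub_right volume (φ t)).measure_preimage hp.compl.nullMeasurableSet).trans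
      (ae_iff.1 h)
  simp [preimage, hslice]

end Translation

lemma meas_add_lt_le_lintegral_div {α : Type*} [MeasurableSpace α] {μ : Measure α}
    {F G : α → ℝ≥0∞} (hG : AEMeasurable G μ) {a ε : ℝ≥0∞} (hF : ∀ x, F x ≤ a + G x)
    (hε : ε ≠ 0) (hε' : ε ≠ ∞) : μ {x | a + ε < F x} ≤ (∫⁻ x, G x ∂μ) / ε :=
  (measure_mono fun x hx => (lt_of_add_lt_add_left (lt_of_lt_of_le hx (hF x))).le).trans
    (meas_ge_le_lintegral_div hG hε hε')

noncomputable def sinAverage (g : ℝ → ℝ≥0∞) (x : ℝ) : ℝ≥0∞ :=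
  (ENNReal.ofReal (2 * π))⁻¹ * ∫⁻ t in Ioc 0 (2 * π), g (x - sin t)

lemma measurable_sinAverage {g : ℝ → ℝ≥0∞} (hg : Measurable g) : Measurable (sinAverage g) :=
  (measurable_setLIntegral_sub_comp hg measurable_sin _).const_mul _

lemma lintegral_sinAverage {g : ℝ → ℝ≥0∞} (hg : Measurable g) :
    ∫⁻ x, sinAverage g x = ∫⁻ y, g y := by
  have h2π : ENNReal.ofReal (2 * π) ≠ 0 := by simp [pi_pos]
  unfold sinAverage
  rw [lintegral_const_mul _ (measurable_setLIntegral_sub_comp hg measurable_sin _),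
    lintegral_setLIntegral_sub_comp hg measurable_sin, Real.volume_Ioc, sub_zero, ← mul_assoc,
    ENNReal.inv_mul_cancel h2π ENNReal.ofReal_ne_top, one_mul]

lemma sinAverage_le_add {g : ℝ → ℝ≥0∞} {δ : ℝ} (hδ : 0 < δ) (x : ℝ) :
    sinAverage g x ≤ (ENNReal.ofReal (2 * π))⁻¹ * (3 * (ENNReal.ofReal δ⁻¹ * ∫⁻ y, g y))
      + (ENNReal.ofReal (2 * π))⁻¹ * ∫⁻ t in Ioc 0 (2 * π) ∩ {t | |cos t| < δ}, g (x - sin t) := by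
  have hcover : Ioc 0 (2 * π)
      ⊆ (Ioc 0 (2 * π) ∩ {t | δ ≤ |cos t|}) ∪ (Ioc 0 (2 * π) ∩ {t | |cos t| < δ}) := by
    rw [← inter_union_distrib_left]
    exact subset_inter subset_rfl fun t _ => le_or_gt δ |cos t|
  have hgood := setLIntegral_sin_le hδ (fun y => g (x - y))
  rw [lintegral_sub_left_eq_self] at hgood
  rw [sinAverage, ← mul_add]
  gcongr
  exact (lintegral_mono_set hcover).trans ((lintegral_union_le _ _ _).trans (by gcongr))

lemma volume_lt_sinAverage_le_of_lintegral_eq {g : ℝ → ℝ≥0∞} (hg : Measurable g) {b : ℝ}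
    (hb : 0 < b) (hMb : ∫⁻ y, g y = ENNReal.ofReal b) {l : ℝ} (hl : 0 < l) :
    volume {x | ENNReal.ofReal l < sinAverage g x}
      ≤ ENNReal.ofReal 4 * ENNReal.ofReal l ^ (-(2 : ℝ)) * ENNReal.ofReal b ^ 2 := by
  set δ := 3 * b / (π * l)
  have hδ : 0 < δ := by positivity
  have h2π : (ENNReal.ofReal (2 * π))⁻¹ = ENNReal.ofReal (2 * π)⁻¹ :=
    (ENNReal.ofReal_inv_of_pos (by positivity)).symm
  have hgood : (ENNReal.ofReal (2 * π))⁻¹ * (3 * (ENNReal.ofReal δ⁻¹ * ∫⁻ y, g y))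
      = ENNReal.ofReal (l / 2) := by
    rw [hMb, h2π, ← ENNReal.ofReal_ofNat 3, ← ENNReal.ofReal_mul (by positivity),
      ← ENNReal.ofReal_mul (by positivity), ← ENNReal.ofReal_mul (by positivity)]
    congr 1
    simp only [δ]
    field_simp
  have hbad : ∫⁻ x, (ENNReal.ofReal (2 * π))⁻¹
        * ∫⁻ t in Ioc 0 (2 * π) ∩ {t | |cos t| < δ}, g (x - sin t)
      ≤ ENNReal.ofReal (2 * π)⁻¹ * (ENNReal.ofReal (4 * π * δ) * ENNReal.ofReal b) := by
    rw [lintegral_const_mul _ (measurable_setLIntegral_sub_comp hg measurable_sin _),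
      lintegral_setLIntegral_sub_comp hg measurable_sin, hMb, h2π]
    gcongr
    exact volume_Ioc_inter_abs_cos_lt_le hδ
  calc volume {x | ENNReal.ofReal l < sinAverage g x}
      = volume {x | ENNReal.ofReal (l / 2) + ENNReal.ofReal (l / 2) < sinAverage g x} := by
        rw [← ENNReal.ofReal_add (by positivity) (by positivity), add_halves]
    _ ≤ (ENNReal.ofReal (2 * π)⁻¹ * (ENNReal.ofReal (4 * π * δ) * ENNReal.ofReal b))
          / ENNReal.ofReal (l / 2) := by
        refine (meas_add_lt_le_lintegral_div ?_ (fun x => hgood ▸ sinAverage_le_add hδ x)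
          (by simpa using hl) ENNReal.ofReal_ne_top).trans (by gcongr)
        exact ((measurable_setLIntegral_sub_comp hg measurable_sin _).const_mul _).aemeasurable
    _ ≤ ENNReal.ofReal 4 * ENNReal.ofReal l ^ (-(2 : ℝ)) * ENNReal.ofReal b ^ 2 := by
        rw [← ENNReal.ofReal_mul (by positivity), ← ENNReal.ofReal_mul (by positivity),
          ← ENNReal.ofReal_div_of_pos (by positivity), ENNReal.ofReal_rpow_of_pos hl,
          ← ENNReal.ofReal_mul (by positivity), ← ENNReal.ofReal_pow hb.le,
          ← ENNReal.ofReal_mul (by positivity)]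
        refine ENNReal.ofReal_le_ofReal ?_
        rw [Real.rpow_neg hl.le, Real.rpow_two]
        simp only [δ]
        field_simp
        nlinarith [pi_gt_three, mul_pos hb hb]

theorem volume_lt_sinAverage_le {g : ℝ → ℝ≥0∞} (hg : Measurable g) {l : ℝ} (hl : 0 < l) :
    volume {x | ENNReal.ofReal l < sinAverage g x}
      ≤ ENNReal.ofReal 4 * ENNReal.ofReal l ^ (-(2 : ℝ)) * (∫⁻ y, g y) ^ 2 := by
  rcases eq_or_ne (∫⁻ y, g y) ∞ with hM | hM
  · simp [hM]
  rcases eq_or_ne (∫⁻ y, g y) 0 with hM0 | hM0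
  · calc volume {x | ENNReal.ofReal l < sinAverage g x}
        ≤ (∫⁻ x, sinAverage g x) / ENNReal.ofReal l :=
          (measure_mono fun x (hx : ENNReal.ofReal l < sinAverage g x) => hx.le).trans
            (meas_ge_le_lintegral_div (measurable_sinAverage hg).aemeasurable (by simpa using hl)
              ENNReal.ofReal_ne_top)
      _ ≤ _ := by simp [lintegral_sinAverage hg, hM0]
  rw [← ENNReal.ofReal_toReal hM]
  exact volume_lt_sinAverage_le_of_lintegral_eq hg (ENNReal.toReal_pos hM0 hM)
    (ENNReal.ofReal_toReal hM).symm hl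

lemma T2_ae_le_sinAverage {f₁ : ℝ → ℝ} (hf₁ : Measurable f₁) (f₂ : ℝ → ℝ) :
    ∀ᵐ x, T2 f₁ f₂ x ≤ sinAverage
      (fun y => essSup (fun y => ENNReal.ofReal (f₁ y)) volume * ENNReal.ofReal (f₂ y)) x := by
  have hle := ae_le_essSup (fun y => ENNReal.ofReal (f₁ y)) (μ := volume)
  filter_upwards [ae_ae_sub_comp (measurableSet_le hf₁.ennreal_ofReal measurable_const) hle
    measurable_cos (Ioc 0 (2 * π))] with x hx
  exact mul_le_mul_right (lintegral_mono_ae (hx.mono fun t ht => mul_le_mul_left ht _)) _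

lemma lpNorm_top_eq_essSup (g : ℝ → ℝ≥0∞) : lpNorm ∞ g = essSup g volume := if_pos rfl

lemma lpNorm_one_eq_lintegral (g : ℝ → ℝ≥0∞) : lpNorm 1 g = ∫⁻ x, g x := by
  simp [_root_.lpNorm]

theorem weak_type_at_K :
    ∃ C : ℝ, 0 < C ∧ ∀ f₁ f₂ : ℝ → ℝ, Measurable f₁ → Measurable f₂ →
      (∀ x, 0 ≤ f₁ x) → (∀ x, 0 ≤ f₂ x) →
      ∀ l : ℝ, 0 < l →
      volume {x : ℝ | ENNReal.ofReal l < T2 f₁ f₂ x} ≤ ENNReal.ofReal C *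
        ENNReal.ofReal l ^ (-(2 : ℝ)) *
        lpNorm ∞ (fun x => ENNReal.ofReal (f₁ x)) ^ 2 *
        lpNorm 1 (fun x => ENNReal.ofReal (f₂ x)) ^ 2 := by
  refine ⟨4, by norm_num, fun f₁ f₂ hf₁ hf₂ _ _ l hl => ?_⟩
  set M₁ := essSup (fun y => ENNReal.ofReal (f₁ y)) volume
  calc volume {x | ENNReal.ofReal l < T2 f₁ f₂ x}
      ≤ volume {x | ENNReal.ofReal l < sinAverage (fun y => M₁ * ENNReal.ofReal (f₂ y)) x} :=
        measure_mono_ae ((T2_ae_le_sinAverage hf₁ f₂).mono fun x hx h => h.trans_le hx)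
    _ ≤ ENNReal.ofReal 4 * ENNReal.ofReal l ^ (-(2 : ℝ))
          * (∫⁻ y, M₁ * ENNReal.ofReal (f₂ y)) ^ 2 :=
        volume_lt_sinAverage_le (hf₂.ennreal_ofReal.const_mul M₁) hl
    _ = _ := by
        rw [lintegral_const_mul _ hf₂.ennreal_ofReal, lpNorm_top_eq_essSup,
          lpNorm_one_eq_lintegral, mul_pow]
        ring
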